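/- arXiv:quant-ph/0510222 — 2 statements merged into one kernel-verified Lean document; each statement's English description precedes it below -/
import Mathlib

section
/- Let C be Hermitian with non-degenerate spectrum and ρ_d = |ψ_d⟩⟨ψ_d| for an eigenvector ψ_d of C. The function V(ρ) = 1 − tr(ρ_d ρ) + tr(C²ρ) − (tr(Cρ))² on density matrices is nonnegative and vanishes only at ρ = ρ_d. -/
/-!
Write `P = 1 - ρ_d` and `D = C - tr(Cρ)`; since `tr(Cρ)` is real, `D` is Hermitian, and
`V(ρ) = tr(P ρ Pᴴ) + tr(D ρ Dᴴ)` is a sum of traces of positive semidefinite matrices.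
If `V(ρ) = 0` then `P ρ Pᴴ = 0`, which for `ρ ≥ 0` forces `ρ P = 0`; hence `ρ = ρ_d ρ ρ_d`,
and this is `tr(ρ_d ρ) ρ_d = ρ_d`.
-/

open scoped ComplexOrder

namespace Matrix

variable {𝕜 m n : Type*} [RCLike 𝕜] [Fintype m] [Fintype n]

lemma PosSemidef.mul_conjTranspose_eq_zero_of_trace_eq_zero {ρ : Matrix n n 𝕜}
    (hρ : ρ.PosSemidef) {B : Matrix m n 𝕜} (h : (B * ρ * Bᴴ).trace = 0) : ρ * Bᴴ = 0 := by
  have hzero : B * ρ * Bᴴ = 0 := (hρ.mul_mul_conjTranspose_same B).trace_eq_zero_iff.mp h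
  refine ext_iff_mulVec.mpr fun x => ?_
  rw [← mulVec_mulVec, zero_mulVec, ← hρ.dotProduct_mulVec_zero_iff, star_mulVec,
    ← dotProduct_mulVec, mulVec_mulVec, mulVec_mulVec, conjTranspose_conjTranspose, hzero,
    zero_mulVec, dotProduct_zero]

lemma IsHermitian.star_trace_mul {A B : Matrix n n 𝕜} (hA : A.IsHermitian) (hB : B.IsHermitian) :
    star (A * B).trace = (A * B).trace := by
  rw [← trace_conjTranspose, conjTranspose_mul, hA.eq, hB.eq, trace_mul_comm]

section Projector

variable {ψ : n → 𝕜}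

lemma trace_mul_vecMulVec_star_of_mulVec_eq_smul (hψ : star ψ ⬝ᵥ ψ = 1) {A : Matrix n n 𝕜}
    {c : 𝕜} (h : A *ᵥ ψ = c • ψ) : (A * vecMulVec ψ (star ψ)).trace = c := by
  rw [mul_vecMulVec, h, trace_vecMulVec, smul_dotProduct, dotProduct_comm, hψ, smul_eq_mul,
    mul_one]

lemma vecMulVec_star_mul_self (hψ : star ψ ⬝ᵥ ψ = 1) :
    vecMulVec ψ (star ψ) * vecMulVec ψ (star ψ) = vecMulVec ψ (star ψ) := by
  rw [vecMulVec_mul_vecMulVec, hψ, one_smul]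

lemma vecMulVec_star_mul_mul_vecMulVec_star (ρ : Matrix n n 𝕜) :
    vecMulVec ψ (star ψ) * ρ * vecMulVec ψ (star ψ)
      = (vecMulVec ψ (star ψ) * ρ).trace • vecMulVec ψ (star ψ) := by
  rw [vecMulVec_mul, vecMulVec_mul_vecMulVec, vecMulVec_smul, trace_vecMulVec, dotProduct_comm]

variable [DecidableEq n]

lemma trace_one_sub_vecMulVec_star_mul_mul_conjTranspose (hψ : star ψ ⬝ᵥ ψ = 1)
    (ρ : Matrix n n 𝕜) :
    ((1 - vecMulVec ψ (star ψ)) * ρ * (1 - vecMulVec ψ (star ψ))ᴴ).trace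
      = ρ.trace - (vecMulVec ψ (star ψ) * ρ).trace := by
  have hidem : (1 - vecMulVec ψ (star ψ)) * (1 - vecMulVec ψ (star ψ))
      = 1 - vecMulVec ψ (star ψ) := by
    rw [sub_mul, mul_sub, mul_sub, vecMulVec_star_mul_self hψ, Matrix.one_mul, Matrix.mul_one,
      Matrix.one_mul, sub_self, sub_zero]
  rw [conjTranspose_sub, conjTranspose_one, conjTranspose_vecMulVec, star_star, trace_mul_cycle,
    hidem, sub_mul, Matrix.one_mul, trace_sub]

lemma PosSemidef.trace_vecMulVec_star_mul_le_one (hψ : star ψ ⬝ᵥ ψ = 1) {ρ : Matrix n n 𝕜}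
    (hρ : ρ.PosSemidef) (htr : ρ.trace = 1) : (vecMulVec ψ (star ψ) * ρ).trace ≤ 1 := by
  rw [← sub_nonneg, ← htr, ← trace_one_sub_vecMulVec_star_mul_mul_conjTranspose hψ]
  exact (hρ.mul_mul_conjTranspose_same _).trace_nonneg

lemma PosSemidef.eq_vecMulVec_star_of_trace_mul_eq_one (hψ : star ψ ⬝ᵥ ψ = 1)
    {ρ : Matrix n n 𝕜} (hρ : ρ.PosSemidef) (htr : ρ.trace = 1)
    (h : (vecMulVec ψ (star ψ) * ρ).trace = 1) : ρ = vecMulVec ψ (star ψ) := by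
  set P := vecMulVec ψ (star ψ) with hP
  have hPρ : ρ * (1 - P)ᴴ = 0 := hρ.mul_conjTranspose_eq_zero_of_trace_eq_zero <| by
    rw [trace_one_sub_vecMulVec_star_mul_mul_conjTranspose hψ, htr, h, sub_self]
  have hright : ρ = ρ * P := by
    rwa [conjTranspose_sub, conjTranspose_one, hP, conjTranspose_vecMulVec, star_star, mul_sub,
      Matrix.mul_one, sub_eq_zero] at hPρ
  have hleft : ρ = P * ρ := calc
    ρ = ρᴴ := hρ.isHermitian.eq.symm
    _ = P * ρ := by
      conv_lhs => rw [hright]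
      rw [conjTranspose_mul, hP, conjTranspose_vecMulVec, star_star, hρ.isHermitian.eq]
  calc ρ = P * ρ * P := by conv_lhs => rw [hleft, hright, ← Matrix.mul_assoc]
    _ = P := by rw [hP, vecMulVec_star_mul_mul_vecMulVec_star, ← hP, h, one_smul]

end Projector

lemma PosSemidef.sq_trace_mul_le_trace_sq_mul [DecidableEq n] {A ρ : Matrix n n 𝕜}
    (hA : A.IsHermitian) (hρ : ρ.PosSemidef) (htr : ρ.trace = 1) :
    (A * ρ).trace ^ 2 ≤ (A ^ 2 * ρ).trace := by
  set t := (A * ρ).trace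
  set D := A - t • 1
  have hD : Dᴴ = D := by
    simp only [D, conjTranspose_sub, conjTranspose_smul, conjTranspose_one, hA.eq,
      hA.star_trace_mul hρ.isHermitian, t]
  have hvar : (D * ρ * Dᴴ).trace = (A ^ 2 * ρ).trace - t ^ 2 := by
    rw [hD, trace_mul_cycle]
    simp only [D, pow_two, sub_mul, mul_sub, Matrix.smul_mul, Matrix.mul_smul, Matrix.one_mul,
      Matrix.mul_one, trace_sub, trace_smul, htr, smul_eq_mul, t]
    ring
  rw [← sub_nonneg, ← hvar]
  exact (hρ.mul_mul_conjTranspose_same D).trace_nonneg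

end Matrix

open Matrix

theorem stmt_7_general (N : ℕ) (C : Matrix (Fin N) (Fin N) ℂ) (hC : C.IsHermitian)
    (ψd : Fin N → ℂ) (hψd : dotProduct (star ψd) ψd = 1)
    (cd : ℂ) (heig : C.mulVec ψd = cd • ψd)
    (ρd : Matrix (Fin N) (Fin N) ℂ) (hρd : ρd = Matrix.vecMulVec ψd (star ψd))
    (ρ : Matrix (Fin N) (Fin N) ℂ) (hρ : ρ.PosSemidef) (htr : ρ.trace = 1) :
    (0 ≤ (1 - (ρd * ρ).trace + (C ^ 2 * ρ).trace - ((C * ρ).trace) ^ 2).re ∧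
      (1 - (ρd * ρ).trace + (C ^ 2 * ρ).trace - ((C * ρ).trace) ^ 2).im = 0) ∧
    (1 - (ρd * ρ).trace + (C ^ 2 * ρ).trace - ((C * ρ).trace) ^ 2 = 0 ↔ ρ = ρd) := by
  subst hρd
  have hfid := sub_nonneg.mpr (hρ.trace_vecMulVec_star_mul_le_one hψd htr)
  have hvar := sub_nonneg.mpr (hρ.sq_trace_mul_le_trace_sq_mul hC htr)
  rw [add_sub_assoc]
  refine ⟨?_, fun h0 => ?_, ?_⟩
  · obtain ⟨hre, him⟩ := Complex.nonneg_iff.mp (add_nonneg hfid hvar)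
    exact ⟨hre, him.symm⟩
  · have hfid0 := ((add_eq_zero_iff_of_nonneg hfid hvar).mp h0).1
    exact hρ.eq_vecMulVec_star_of_trace_mul_eq_one hψd htr (sub_eq_zero.mp hfid0).symm
  · rintro rfl
    have hproj : vecMulVec ψd (star ψd) *ᵥ ψd = (1 : ℂ) • ψd := by
      rw [vecMulVec_mulVec, hψd, one_smul, MulOpposite.op_one, one_smul]
    have hsq : (C ^ 2) *ᵥ ψd = cd ^ 2 • ψd := by
      rw [sq, sq, ← mulVec_mulVec, heig, mulVec_smul, heig, smul_smul]
    rw [trace_mul_vecMulVec_star_of_mulVec_eq_smul hψd hproj,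
      trace_mul_vecMulVec_star_of_mulVec_eq_smul hψd heig,
      trace_mul_vecMulVec_star_of_mulVec_eq_smul hψd hsq]
    ring

/-- Let `C` be Hermitian with non-degenerate spectrum and `ρ_d = ψ_d ψ_d*` for a unit
eigenvector `ψ_d` of `C`. Then `V(ρ) = 1 − tr(ρ_d ρ) + tr(C²ρ) − (tr(Cρ))²` is a
nonnegative real on density matrices, vanishing only at `ρ = ρ_d`. -/
theorem stmt_7 (N : ℕ) (C : Matrix (Fin N) (Fin N) ℂ) (hC : C.IsHermitian)
    (hnondeg : ∀ (c : ℂ) (v w : Fin N → ℂ), v ≠ 0 → w ≠ 0 →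
      C.mulVec v = c • v → C.mulVec w = c • w → ∃ a : ℂ, w = a • v)
    (ψd : Fin N → ℂ) (hψd : dotProduct (star ψd) ψd = 1)
    (cd : ℂ) (heig : C.mulVec ψd = cd • ψd)
    (ρd : Matrix (Fin N) (Fin N) ℂ) (hρd : ρd = Matrix.vecMulVec ψd (star ψd))
    (ρ : Matrix (Fin N) (Fin N) ℂ) (hρ : ρ.PosSemidef) (htr : ρ.trace = 1) :
    (0 ≤ (1 - (ρd * ρ).trace + (C ^ 2 * ρ).trace - ((C * ρ).trace) ^ 2).re ∧
      (1 - (ρd * ρ).trace + (C ^ 2 * ρ).trace - ((C * ρ).trace) ^ 2).im = 0) ∧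
    (1 - (ρd * ρ).trace + (C ^ 2 * ρ).trace - ((C * ρ).trace) ^ 2 = 0 ↔ ρ = ρd) :=
  stmt_7_general N C hC ψd hψd cd heig ρd hρd ρ hρ htr
end

section
/- For any density matrix ρ and Hermitian C with G(ρ) = Cρ + ρC − 2tr(Cρ)ρ (the diffusion term), tr(C²·G(ρ)) − 2tr(Cρ)·tr(C·G(ρ)) = 2σ(C,ρ), where σ(C,ρ) = tr(C³ρ) − 3tr(Cρ)tr(C²ρ) + 2(tr(Cρ))³ is the third central moment. -/
open scoped ComplexOrder

/-- With `G(ρ) = Cρ + ρC − 2tr(Cρ)ρ` the diffusion term, one has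
`tr(C²G(ρ)) − 2tr(Cρ)tr(C·G(ρ)) = 2σ(C,ρ)` where `σ` is the third central moment. -/
theorem stmt_14 (N : ℕ) (ρ C : Matrix (Fin N) (Fin N) ℂ)
    (hρ : ρ.PosSemidef) (htr : ρ.trace = 1) (hC : C.IsHermitian)
    (G : Matrix (Fin N) (Fin N) ℂ)
    (hG : G = C * ρ + ρ * C - (2 * (C * ρ).trace) • ρ) :
    (C ^ 2 * G).trace - 2 * (C * ρ).trace * (C * G).trace =
      2 * ((C ^ 3 * ρ).trace - 3 * (C * ρ).trace * (C ^ 2 * ρ).trace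
        + 2 * ((C * ρ).trace) ^ 3) := by
  subst hG
  simp only [mul_add, mul_sub, Matrix.mul_smul, Matrix.trace_add, Matrix.trace_sub,
    Matrix.trace_smul, smul_eq_mul, pow_succ, pow_zero, one_mul]
  rw [(mul_assoc C ρ C).symm, Matrix.trace_mul_comm (C * ρ) C,
    (mul_assoc (C * C) ρ C).symm, Matrix.trace_mul_comm (C * C * ρ) C]
  simp only [← mul_assoc]
  ring
end
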